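/- arXiv:1601.00009 — 3 statements merged into one kernel-verified Lean document; each statement's English description precedes it below -/
import Mathlib

section
/- Let f₁ : ℝ → ℝ be a nonnegative integrable function and define F₁(z) = ∫_z^∞ f₁(t) dt. Let m > 0, ω ∈ (0,1), π₁^in > 0, π₁^out > 0, and set π₁ = ω·π₁^in + (1−ω)·π₁^out. Let z_in ≤ z₀ ≤ z_out be real numbers with F₁(z_in) − F₁(z₀) > 0. If (F₁(z₀) − F₁(z_out)) / (F₁(z_in) − F₁(z₀)) < (ω·π₁^in) / ((1−ω)·π₁^out), then m·ω·π₁^in·F₁(z_in) + m·(1−ω)·π₁^out·F₁(z_out) > m·π₁·F₁(z₀). That is, the expected number of true positive edges under the network-based (NICE) thresholds z_in, z_out is strictly greater than under the universal threshold z₀ (equivalently, the expected number of false negatives is strictly smaller). -/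
/- Moving from the universal cut-off z₀ to z_in inside the networks gains the within-network mass
ω π₁^in (F₁(z_in) - F₁(z₀)), while moving to z_out outside loses (1 - ω) π₁^out (F₁(z₀) - F₁(z_out)).
Condition 6 is exactly the cross-multiplied statement that the gain exceeds the loss. -/

open MeasureTheory

lemma mixture_tail_sub_eq (m w a b x y z : ℝ) :
    m * w * a * x + m * (1 - w) * b * z - m * (w * a + (1 - w) * b) * y =
      m * (w * a * (x - y) - (1 - w) * b * (y - z)) := by
  ring

theorem stmt3_general
    (F₁ : ℝ → ℝ)
    (m ω πin πout : ℝ) (hm : 0 < m) (hω1 : ω < 1)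
    (hπout : 0 < πout)
    (π₁ : ℝ) (hπ₁ : π₁ = ω * πin + (1 - ω) * πout)
    (zin z₀ zout : ℝ)
    (hden : 0 < F₁ zin - F₁ z₀)
    (hratio : (F₁ z₀ - F₁ zout) / (F₁ zin - F₁ z₀) < ω * πin / ((1 - ω) * πout)) :
    m * ω * πin * F₁ zin + m * (1 - ω) * πout * F₁ zout > m * π₁ * F₁ z₀ := by
  have hout : 0 < (1 - ω) * πout := mul_pos (sub_pos.mpr hω1) hπout
  have hloss_lt_gain : (F₁ z₀ - F₁ zout) * ((1 - ω) * πout) < ω * πin * (F₁ zin - F₁ z₀) :=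
    (div_lt_div_iff₀ hden hout).mp hratio
  subst hπ₁
  rw [gt_iff_lt, ← sub_pos, mixture_tail_sub_eq]
  exact mul_pos hm (by linarith)

/-- False-negative half of Theorem 3: the expected number of true positives under
the network-based thresholds is strictly larger than under the universal threshold. -/
theorem stmt3 (f₁ : ℝ → ℝ) (hf₁ : ∀ x, 0 ≤ f₁ x)
    (hint : Integrable f₁ (volume : Measure ℝ))
    (F₁ : ℝ → ℝ) (hF₁ : ∀ z, F₁ z = ∫ t in Set.Ioi z, f₁ t)
    (m ω πin πout : ℝ) (hm : 0 < m) (hω0 : 0 < ω) (hω1 : ω < 1)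
    (hπin : 0 < πin) (hπout : 0 < πout)
    (π₁ : ℝ) (hπ₁ : π₁ = ω * πin + (1 - ω) * πout)
    (zin z₀ zout : ℝ) (h1 : zin ≤ z₀) (h2 : z₀ ≤ zout)
    (hden : 0 < F₁ zin - F₁ z₀)
    (hratio : (F₁ z₀ - F₁ zout) / (F₁ zin - F₁ z₀) < ω * πin / ((1 - ω) * πout)) :
    m * ω * πin * F₁ zin + m * (1 - ω) * πout * F₁ zout > m * π₁ * F₁ z₀ :=
  stmt3_general F₁ m ω πin πout hm hω1 hπout π₁ hπ₁ zin z₀ zout hden hratio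
end

section
/- Let z be a real-valued random variable on a probability space, let n be a positive integer, and let K, c₀, τ > 0 be constants. Let μ ∈ ℝ satisfy μ ≥ c₀·n^{τ−1/2}, and assume: (i) √n·|E[z] − μ| ≤ 1; (ii) for every t > 0, P[ √n·(z − E[z]) ≤ −t ] ≤ exp(−K·t²). Let A > 0 satisfy log A ≤ c₀²·n^{2τ}/8, and suppose n^τ ≥ 8/c₀. Then P[ φ(√n·(z − μ)) ≤ A·φ(√n·z) ] ≤ exp( −(c₀²·K/16)·n^{2τ} ). -/
/-!
On the event, taking logarithms of the Gaussian likelihood ratio with `d = √n μ` gives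
`√n z ≤ d / 2 + log A / d`. Since `d ≥ c := c₀ n^τ ≥ 8` and `log A ≤ c² / 8`, the right-hand side
is at most `d / 2 + c / 8`, while the mean of `√n z` is at least `d - 1 ≥ d - c / 8`. So the event
forces a lower deviation of `√n (z - E z)` of size at least `c / 4`, and the tail bound with
`t = c / 4` gives `exp (-K c² / 16)`.
-/

open MeasureTheory

/-- The standard normal density. -/
noncomputable def phi (x : ℝ) : ℝ := Real.exp (-x ^ 2 / 2) / Real.sqrt (2 * Real.pi)

lemma phi_pos (x : ℝ) : 0 < phi x :=
  div_pos (Real.exp_pos _) (Real.sqrt_pos.mpr (by positivity))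

lemma log_phi (x : ℝ) :
    Real.log (phi x) = -x ^ 2 / 2 - Real.log (Real.sqrt (2 * Real.pi)) := by
  rw [phi, Real.log_div (Real.exp_ne_zero _) (Real.sqrt_pos.mpr (by positivity)).ne',
    Real.log_exp]

lemma phi_sub_le_mul_phi_iff {x d A : ℝ} (hd : 0 < d) (hA : 0 < A) :
    phi (x - d) ≤ A * phi x ↔ x ≤ d / 2 + Real.log A / d := by
  rw [← Real.log_le_log_iff (phi_pos _) (mul_pos hA (phi_pos _)),
    Real.log_mul hA.ne' (phi_pos _).ne', log_phi, log_phi]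
  have hx : x ≤ d / 2 + Real.log A / d ↔ (x - d / 2) * d ≤ Real.log A := by
    rw [← sub_le_iff_le_add', le_div_iff₀ hd]
  rw [hx]
  constructor <;> intro h <;> linarith

/-- Here `y`, `d`, `e` stand for `√n z`, `√n μ` and `√n E z`. -/
lemma sub_le_neg_quarter_of_phi_sub_le {y d e A c : ℝ} (hA : 0 < A) (hc : 8 ≤ c) (hcd : c ≤ d)
    (hde : d - 1 ≤ e) (hlogA : Real.log A ≤ c ^ 2 / 8) (h : phi (y - d) ≤ A * phi y) :
    y - e ≤ -(c / 4) := by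
  have hd : 0 < d := by linarith
  have hy : y ≤ d / 2 + Real.log A / d := (phi_sub_le_mul_phi_iff hd hA).1 h
  have hlogA_div : Real.log A / d ≤ c / 8 := by
    rw [div_le_iff₀ hd]
    nlinarith
  linarith

lemma sqrt_mul_rpow_sub_half {n : ℝ} (hn : 0 < n) (τ : ℝ) :
    Real.sqrt n * n ^ (τ - 1 / 2) = n ^ τ := by
  rw [Real.sqrt_eq_rpow, ← Real.rpow_add hn]
  norm_num

theorem stmt5_general {Ω : Type*} [MeasurableSpace Ω] (P : Measure Ω) [IsProbabilityMeasure P]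
    (z : Ω → ℝ)
    (n : ℕ) (hn : 0 < n) (K c₀ τ : ℝ) (hc₀ : 0 < c₀)
    (μ : ℝ) (hμ : c₀ * (n : ℝ) ^ (τ - 1 / 2) ≤ μ)
    (hE : Real.sqrt n * |(∫ ω, z ω ∂P) - μ| ≤ 1)
    (htail : ∀ t > (0 : ℝ),
      (P {ω | Real.sqrt n * (z ω - ∫ ω', z ω' ∂P) ≤ -t}).toReal ≤ Real.exp (-K * t ^ 2))
    (A : ℝ) (hA : 0 < A) (hlogA : Real.log A ≤ c₀ ^ 2 * (n : ℝ) ^ (2 * τ) / 8)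
    (hnτ : 8 / c₀ ≤ (n : ℝ) ^ τ) :
    (P {ω | phi (Real.sqrt n * (z ω - μ)) ≤ A * phi (Real.sqrt n * z ω)}).toReal ≤
      Real.exp (-(c₀ ^ 2 * K / 16) * (n : ℝ) ^ (2 * τ)) := by
  set m := ∫ ω, z ω ∂P
  set s := Real.sqrt n
  have hn' : (0 : ℝ) < n := Nat.cast_pos.mpr hn
  have hs : 0 < s := Real.sqrt_pos.mpr hn'
  set c := c₀ * (n : ℝ) ^ τ
  have hc : 8 ≤ c := by rwa [div_le_iff₀' hc₀] at hnτ
  have hc_sq : c ^ 2 = c₀ ^ 2 * (n : ℝ) ^ (2 * τ) := by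
    rw [mul_comm 2 τ, Real.rpow_mul hn'.le, Real.rpow_two, mul_pow]
  have hcd : c ≤ s * μ := by
    calc c = c₀ * (s * (n : ℝ) ^ (τ - 1 / 2)) := by rw [sqrt_mul_rpow_sub_half hn']
      _ ≤ s * μ := by rw [mul_left_comm]; exact mul_le_mul_of_nonneg_left hμ hs.le
  have hde : s * μ - 1 ≤ s * m := by
    have : s * (μ - m) ≤ s * |m - μ| :=
      mul_le_mul_of_nonneg_left (abs_sub_comm m μ ▸ le_abs_self _) hs.le
    linarith
  have hevent : {ω | phi (s * (z ω - μ)) ≤ A * phi (s * z ω)} ⊆ {ω | s * (z ω - m) ≤ -(c / 4)} :=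
    fun ω h => by
      have := sub_le_neg_quarter_of_phi_sub_le (y := s * z ω) hA hc hcd hde (hc_sq ▸ hlogA)
        (by rwa [← mul_sub])
      rwa [← mul_sub] at this
  calc (P {ω | phi (s * (z ω - μ)) ≤ A * phi (s * z ω)}).toReal
      ≤ (P {ω | s * (z ω - m) ≤ -(c / 4)}).toReal :=
        ENNReal.toReal_mono (measure_ne_top _ _) (measure_mono hevent)
    _ ≤ Real.exp (-K * (c / 4) ^ 2) := htail (c / 4) (by linarith)
    _ = Real.exp (-(c₀ ^ 2 * K / 16) * (n : ℝ) ^ (2 * τ)) := by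
        rw [show -K * (c / 4) ^ 2 = -(K / 16) * c ^ 2 by ring, hc_sq]
        ring_nf

/-- Quantitative single-edge form of Lemma 4, true-edge case: for a sub-Gaussian
statistic `z` with mean close to `μ ≥ c₀ n^{τ-1/2}`, the Gaussian likelihood-ratio
threshold event has exponentially small probability. -/
theorem stmt5 {Ω : Type*} [MeasurableSpace Ω] (P : Measure Ω) [IsProbabilityMeasure P]
    (z : Ω → ℝ) (hz : Measurable z)
    (n : ℕ) (hn : 0 < n) (K c₀ τ : ℝ) (hK : 0 < K) (hc₀ : 0 < c₀) (hτ : 0 < τ)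
    (μ : ℝ) (hμ : c₀ * (n : ℝ) ^ (τ - 1 / 2) ≤ μ)
    (hE : Real.sqrt n * |(∫ ω, z ω ∂P) - μ| ≤ 1)
    (htail : ∀ t > (0 : ℝ),
      (P {ω | Real.sqrt n * (z ω - ∫ ω', z ω' ∂P) ≤ -t}).toReal ≤ Real.exp (-K * t ^ 2))
    (A : ℝ) (hA : 0 < A) (hlogA : Real.log A ≤ c₀ ^ 2 * (n : ℝ) ^ (2 * τ) / 8)
    (hnτ : 8 / c₀ ≤ (n : ℝ) ^ τ) :
    (P {ω | phi (Real.sqrt n * (z ω - μ)) ≤ A * phi (Real.sqrt n * z ω)}).toReal ≤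
      Real.exp (-(c₀ ^ 2 * K / 16) * (n : ℝ) ^ (2 * τ)) :=
  stmt5_general P z n hn K c₀ τ hc₀ μ hμ hE htail A hA hlogA hnτ
end

section
/- Let z be a real-valued random variable on a probability space, let n be a positive integer, and let K, c₀, τ > 0 be constants. Let q ≥ 1 be an integer and μ'_1, …, μ'_q real numbers with |μ'_l| ≥ c₀·n^{τ−1/2} for every l. Assume: (i) √n·|E[z]| ≤ 1; (ii) for every t > 0, P[ √n·|z − E[z]| > t ] ≤ exp(−K·t²). Let A > 0 satisfy A ≥ q, and suppose n^τ ≥ 12/c₀. Then P[ Σ_{l=1}^q φ(√n·(z − μ'_l)) > A·φ(√n·z) ] ≤ 3·exp( −(c₀²·K/144)·n^{2τ} ). -/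
/-!
Since `A ≥ q`, the mixture can only beat `A · φ(√n z)` if a single component does, i.e.
`|√n z - √n μ'_l| < |√n z|` for some `l`. By the triangle inequality this forces
`√n |z| > √n |μ'_l| / 2 ≥ c₀ n^τ / 2`, so `√n |z - E z| > c₀ n^τ / 2 - 1 ≥ c₀ n^τ / 12`,
and the sub-Gaussian tail at `t = c₀ n^τ / 12` gives the bound.
-/

open MeasureTheory

lemma phi_lt_phi_iff {x y : ℝ} : phi x < phi y ↔ |y| < |x| := by
  unfold phi
  rw [div_lt_div_iff_of_pos_right (by positivity), Real.exp_lt_exp, ← sq_lt_sq]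
  constructor <;> intro h <;> linarith

lemma exists_lt_of_mul_lt_sum {ι : Type*} [Fintype ι] {f : ι → ℝ} {c A : ℝ} (hc : 0 ≤ c)
    (hA : (Fintype.card ι : ℝ) ≤ A) (h : A * c < ∑ i, f i) : ∃ i, c < f i := by
  obtain ⟨i, -, hi⟩ := Finset.exists_lt_of_sum_lt (s := Finset.univ) (f := fun _ ↦ c) (g := f) <| by
    calc ∑ _i : ι, c = Fintype.card ι * c := by simp
      _ ≤ A * c := mul_le_mul_of_nonneg_right hA hc
      _ < ∑ i, f i := h
  exact ⟨i, hi⟩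

lemma abs_lt_two_mul_abs_of_abs_sub_lt {m a : ℝ} (h : |m - a| < |m|) : |a| < 2 * |m| := by
  have : |a| ≤ |m| + |m - a| := by simpa using abs_sub m (m - a)
  linarith

lemma half_sub_one_lt_of_mul_phi_lt_sum {ι : Type*} [Fintype ι] {s x μ b A : ℝ} {a : ι → ℝ}
    (hs : 0 ≤ s) (hμ : s * |μ| ≤ 1) (ha : ∀ i, b ≤ s * |a i|)
    (hA : (Fintype.card ι : ℝ) ≤ A) (h : A * phi (s * x) < ∑ i, phi (s * (x - a i))) :
    b / 2 - 1 < s * |x - μ| := by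
  obtain ⟨i, hi⟩ := exists_lt_of_mul_lt_sum (phi_pos _).le hA h
  have hclose : |s * x - s * a i| < |s * x| := by
    rw [← mul_sub]; exact phi_lt_phi_iff.mp hi
  have hfar := abs_lt_two_mul_abs_of_abs_sub_lt hclose
  rw [abs_mul, abs_mul, abs_of_nonneg hs] at hfar
  nlinarith [ha i, mul_le_mul_of_nonneg_left (abs_sub_abs_le_abs_sub x μ) hs]

theorem stmt6_general {Ω : Type*} [MeasurableSpace Ω] (P : Measure Ω) [IsProbabilityMeasure P]
    (z : Ω → ℝ)
    (n : ℕ) (hn : 0 < n) (K c₀ τ : ℝ) (hc₀ : 0 < c₀)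
    (q : ℕ) (μ' : Fin q → ℝ)
    (hμ' : ∀ l, c₀ * (n : ℝ) ^ (τ - 1 / 2) ≤ |μ' l|)
    (hE : Real.sqrt n * |∫ ω, z ω ∂P| ≤ 1)
    (htail : ∀ t > (0 : ℝ),
      (P {ω | t < Real.sqrt n * |z ω - ∫ ω', z ω' ∂P|}).toReal ≤ Real.exp (-K * t ^ 2))
    (A : ℝ) (hA : (q : ℝ) ≤ A)
    (hnτ : 12 / c₀ ≤ (n : ℝ) ^ τ) :
    (P {ω | A * phi (Real.sqrt n * z ω) <
        ∑ l : Fin q, phi (Real.sqrt n * (z ω - μ' l))}).toReal ≤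
      3 * Real.exp (-(c₀ ^ 2 * K / 144) * (n : ℝ) ^ (2 * τ)) := by
  have hn' : (0 : ℝ) < n := by exact_mod_cast hn
  set b := c₀ * (n : ℝ) ^ τ with hb_def
  have hb : 12 ≤ b := by rwa [div_le_iff₀' hc₀] at hnτ
  have hb_le (l : Fin q) : b ≤ Real.sqrt n * |μ' l| :=
    calc b = Real.sqrt n * (c₀ * (n : ℝ) ^ (τ - 1 / 2)) := by
          rw [hb_def, mul_left_comm, Real.sqrt_eq_rpow, ← Real.rpow_add hn']; ring_nf
      _ ≤ Real.sqrt n * |μ' l| := mul_le_mul_of_nonneg_left (hμ' l) (Real.sqrt_nonneg _)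
  have hsub : {ω | A * phi (Real.sqrt n * z ω) < ∑ l : Fin q, phi (Real.sqrt n * (z ω - μ' l))}
      ⊆ {ω | b / 12 < Real.sqrt n * |z ω - ∫ ω', z ω' ∂P|} := fun ω hω ↦
    (by linarith : b / 12 ≤ b / 2 - 1).trans_lt <|
      half_sub_one_lt_of_mul_phi_lt_sum (Real.sqrt_nonneg _) hE hb_le (by simpa using hA) hω
  calc _ ≤ (P {ω | b / 12 < Real.sqrt n * |z ω - ∫ ω', z ω' ∂P|}).toReal :=
        ENNReal.toReal_mono (measure_ne_top _ _) (measure_mono hsub)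
    _ ≤ Real.exp (-K * (b / 12) ^ 2) := htail _ (by linarith)
    _ = Real.exp (-(c₀ ^ 2 * K / 144) * (n : ℝ) ^ (2 * τ)) := by
        rw [mul_comm 2 τ, Real.rpow_mul hn'.le, Real.rpow_two, hb_def]; ring_nf
    _ ≤ 3 * Real.exp (-(c₀ ^ 2 * K / 144) * (n : ℝ) ^ (2 * τ)) :=
        le_mul_of_one_le_left (Real.exp_pos _).le (by norm_num)

/-- Quantitative single-edge form of Lemma 4, non-edge case: for a sub-Gaussian
statistic `z` with mean close to `0`, the event that the Gaussian mixture likelihood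
exceeds `A` times the null density has exponentially small probability. -/
theorem stmt6 {Ω : Type*} [MeasurableSpace Ω] (P : Measure Ω) [IsProbabilityMeasure P]
    (z : Ω → ℝ) (hz : Measurable z)
    (n : ℕ) (hn : 0 < n) (K c₀ τ : ℝ) (hK : 0 < K) (hc₀ : 0 < c₀) (hτ : 0 < τ)
    (q : ℕ) (hq : 1 ≤ q) (μ' : Fin q → ℝ)
    (hμ' : ∀ l, c₀ * (n : ℝ) ^ (τ - 1 / 2) ≤ |μ' l|)
    (hE : Real.sqrt n * |∫ ω, z ω ∂P| ≤ 1)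
    (htail : ∀ t > (0 : ℝ),
      (P {ω | t < Real.sqrt n * |z ω - ∫ ω', z ω' ∂P|}).toReal ≤ Real.exp (-K * t ^ 2))
    (A : ℝ) (hA : (q : ℝ) ≤ A)
    (hnτ : 12 / c₀ ≤ (n : ℝ) ^ τ) :
    (P {ω | A * phi (Real.sqrt n * z ω) <
        ∑ l : Fin q, phi (Real.sqrt n * (z ω - μ' l))}).toReal ≤
      3 * Real.exp (-(c₀ ^ 2 * K / 144) * (n : ℝ) ^ (2 * τ)) :=
  stmt6_general P z n hn K c₀ τ hc₀ q μ' hμ' hE htail A hA hnτ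
end
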